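/- arXiv:1209.2082 — 5 statements merged into one kernel-verified Lean document; each statement's English description precedes it below -/
import Mathlib

section
/- Let f be any real-valued function on the space of finitely supported functions ℤ×ℤ → ℝ that is convex and translation invariant, i.e. f(T_{u,v}(I)) = f(I) for every I and every shift (u,v), where T_{u,v}(I)(x,y) = I(x−u, y−v). Then for every finitely supported I : ℤ×ℤ → ℝ and every kernel K in the simplex S, one has f(I⊗K) ≤ f(I). -/
/-- Images, kernels, and filters: finitely supported functions `ℤ × ℤ → ℝ`. -/
abbrev Img := (ℤ × ℤ) →₀ ℝ

/-- Discrete 2D convolution: `(X ⊗ Y)(i,j) = ∑_{(u,v)} X((i,j)-(u,v)) * Y(u,v)`. -/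
noncomputable def conv (X Y : Img) : Img :=
  X.sum fun a xa => Y.sum fun b yb => Finsupp.single (a + b) (xa * yb)

/-- Frobenius norm `‖X‖_F = √(∑ X(i,j)²)`. -/
noncomputable def frob (X : Img) : ℝ := Real.sqrt (X.sum fun _ c => c ^ 2)

/-- Inner product `⟨X, Y⟩ = ∑ X(i,j) * Y(i,j)`. -/
noncomputable def inner2 (X Y : Img) : ℝ := X.sum fun p c => c * Y p

/-- ℓ¹ norm `‖X‖₁ = ∑ |X(i,j)|`. -/
noncomputable def l1 (X : Img) : ℝ := X.sum fun _ c => |c|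

/-- The simplex `S` of blur kernels: nonnegative entries summing to one. -/
def InSimplex (K : Img) : Prop := (∀ p, 0 ≤ K p) ∧ (K.sum fun _ c => c) = 1

/-- `X` is supported in the `a × b` grid `{0,…,a-1} × {0,…,b-1}`. -/
def SuppIn (a b : ℕ) (X : Img) : Prop :=
  ∀ p : ℤ × ℤ, ¬(0 ≤ p.1 ∧ p.1 < (a : ℤ) ∧ 0 ≤ p.2 ∧ p.2 < (b : ℤ)) → X p = 0

/-- Shift operator `T_{u,v}(I)(x,y) = I(x-u, y-v)`. -/
noncomputable def shiftF (u v : ℤ) (I : Img) : Img := Finsupp.mapDomain (· + (u, v)) I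

lemma conv_eq_sum_shift (I K : Img) :
    conv I K = ∑ b ∈ K.support, K b • shiftF b.1 b.2 I := by
  simp only [conv, Finsupp.sum]
  rw [Finset.sum_comm]
  refine Finset.sum_congr rfl fun b _ => ?_
  rw [shiftF, Finsupp.mapDomain, Finsupp.smul_sum, Finsupp.sum]
  refine Finset.sum_congr rfl fun a _ => ?_
  rw [Finsupp.smul_single, smul_eq_mul, mul_comm]

/-- Any convex, translation-invariant functional on images does not increase under
convolution with a kernel in the simplex. -/
theorem convex_translationInvariant_le_of_conv_simplex
    (f : Img → ℝ) (hconvex : ConvexOn ℝ Set.univ f)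
    (hinv : ∀ (u v : ℤ) (I : Img), f (shiftF u v I) = f I) :
    ∀ (I K : Img), InSimplex K → f (conv I K) ≤ f I := by
  intro I K ⟨hK0, hK1⟩
  simp only [Finsupp.sum] at hK1
  rw [conv_eq_sum_shift]
  calc f (∑ b ∈ K.support, K b • shiftF b.1 b.2 I)
      ≤ ∑ b ∈ K.support, K b * f (shiftF b.1 b.2 I) :=
        hconvex.map_sum_le (fun b _ => hK0 b) hK1 (fun b _ => Set.mem_univ _)
    _ = ∑ b ∈ K.support, K b * f I := by
        refine Finset.sum_congr rfl fun b _ => ?_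
        rw [hinv]
    _ = f I := by rw [← Finset.sum_mul, hK1, one_mul]
end

section
/- For every finitely supported I : ℤ×ℤ → ℝ, every kernel K in the simplex S, and every finitely supported X : ℤ×ℤ → ℝ, one has ‖(I⊗K)⊗X‖_F ≤ ‖I⊗X‖_F. -/
/-! The kernel can be moved past `X` by commutativity of convolution, so `(I ⊗ K) ⊗ X` is the
`K`-weighted average of the translates of `I ⊗ X`. Translation preserves the Frobenius norm, so the
triangle inequality gives Young's bound `‖Y ⊗ K‖_F ≤ ‖K‖₁ ‖Y‖_F`, and `‖K‖₁ = 1` on the simplex. -/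

lemma conv_eq_mul (X Y : Img) :
    conv X Y = (AddMonoidAlgebra.ofCoeff X * AddMonoidAlgebra.ofCoeff Y).coeff := by
  rw [AddMonoidAlgebra.mul_def]
  simp only [AddMonoidAlgebra.coeff_ofCoeff, ← AddMonoidAlgebra.ofCoeff_single,
    ← AddMonoidAlgebra.ofCoeff_finsuppSum]
  rfl

lemma conv_right_comm (A B C : Img) : conv (conv A B) C = conv (conv A C) B := by
  simp only [conv_eq_mul, AddMonoidAlgebra.ofCoeff_coeff, mul_right_comm]

lemma conv_eq_sum_smul_mapDomain (Y K : Img) :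
    conv Y K = ∑ b ∈ K.support, K b • Y.mapDomain (· + b) := by
  unfold conv
  simp only [Finsupp.sum]
  rw [Finset.sum_comm]
  refine Finset.sum_congr rfl fun b _ => ?_
  rw [Finsupp.mapDomain, Finsupp.sum, Finset.smul_sum]
  refine Finset.sum_congr rfl fun a _ => ?_
  rw [Finsupp.smul_single, smul_eq_mul, mul_comm]

noncomputable def Finsupp.toEuclidean {α : Type*} (T : Finset α) :
    (α →₀ ℝ) →+ EuclideanSpace ℝ T where
  toFun X := WithLp.toLp 2 fun p => X p
  map_zero' := rfl
  map_add' _ _ := rfl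

lemma frob_eq_norm_toEuclidean (X : Img) {T : Finset (ℤ × ℤ)} (h : X.support ⊆ T) :
    frob X = ‖Finsupp.toEuclidean T X‖ := by
  rw [EuclideanSpace.norm_eq, frob, Finsupp.sum,
    Finset.sum_subset h fun p _ hp => by simp [Finsupp.notMem_support_iff.mp hp],
    ← Finset.sum_coe_sort T]
  simp only [Real.norm_eq_abs, sq_abs]
  rfl

lemma frob_add_le (X Y : Img) : frob (X + Y) ≤ frob X + frob Y := by
  classical
  have hX := frob_eq_norm_toEuclidean X (T := X.support ∪ Y.support) Finset.subset_union_left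
  have hY := frob_eq_norm_toEuclidean Y (T := X.support ∪ Y.support) Finset.subset_union_right
  rw [frob_eq_norm_toEuclidean (X + Y) Finsupp.support_add, map_add, hX, hY]
  exact norm_add_le _ _

lemma frob_sum_le {ι : Type*} (s : Finset ι) (F : ι → Img) :
    frob (∑ i ∈ s, F i) ≤ ∑ i ∈ s, frob (F i) :=
  Finset.le_sum_of_subadditive frob (by simp [frob]) frob_add_le s F

lemma frob_smul (c : ℝ) (X : Img) : frob (c • X) = |c| * frob X := by
  rw [frob, frob, Finsupp.sum_smul_index (by simp)]
  simp_rw [mul_pow]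
  rw [← Finsupp.mul_sum, Real.sqrt_mul (sq_nonneg c), Real.sqrt_sq_eq_abs]

lemma frob_mapDomain_add (Y : Img) (b : ℤ × ℤ) : frob (Y.mapDomain (· + b)) = frob Y := by
  rw [frob, frob, Finsupp.sum_mapDomain_index_inj (add_left_injective b)]

theorem frob_conv_le_l1_mul_frob (Y K : Img) : frob (conv Y K) ≤ l1 K * frob Y := by
  rw [conv_eq_sum_smul_mapDomain]
  calc frob (∑ b ∈ K.support, K b • Y.mapDomain (· + b))
      ≤ ∑ b ∈ K.support, frob (K b • Y.mapDomain (· + b)) := frob_sum_le _ _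
    _ = l1 K * frob Y := by
      simp only [frob_smul, frob_mapDomain_add, l1, Finsupp.sum, Finset.sum_mul]

lemma InSimplex.l1_eq_one {K : Img} (hK : InSimplex K) : l1 K = 1 := by
  rw [l1, ← hK.2]
  exact Finsupp.sum_congr fun p _ => abs_of_nonneg (hK.1 p)

/-- Blurring by a simplex kernel does not increase `‖I ⊗ X‖_F`. -/
theorem frob_conv_conv_le (I K X : Img) (hK : InSimplex K) :
    frob (conv (conv I K) X) ≤ frob (conv I X) := by
  rw [conv_right_comm]
  simpa only [hK.l1_eq_one, one_mul] using frob_conv_le_l1_mul_frob (conv I X) K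
end

section
/- Fix positive integers s₁, s₂ and let (κ_i)_{i=1,…,s₁s₂} be an orthonormal basis of the space of functions supported in the s₁×s₂ grid. Then for every finitely supported X : ℤ×ℤ → ℝ, one has ∑_{i=1}^{s₁s₂} ‖X⊗κ_i‖_F² = s₁·s₂·‖X‖_F². -/
/-! Writing `G` for the `s₁ × s₂` grid, `(X ⊗ κᵢ)(q) = ∑_{p ∈ G} X(q - p) κᵢ(p)` is the inner product
of `κᵢ` with the window `p ↦ X(q - p)` of `X` on `G`. As the `κᵢ` are an orthonormal basis of the
functions on `G`, Parseval gives `∑ᵢ (X ⊗ κᵢ)(q)² = ∑_{p ∈ G} X(q - p)²` for every `q`. Summing over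
`q` and exchanging the sums, each of the `s₁ s₂` shifts `p` contributes `‖X‖_F²`. -/

open Finset
open scoped Pointwise RealInnerProductSpace

theorem Orthonormal.sum_inner_sq_eq_norm_sq_of_card_eq_finrank {ι E : Type*} [Fintype ι]
    [NormedAddCommGroup E] [InnerProductSpace ℝ E] [FiniteDimensional ℝ E] {v : ι → E}
    (hv : Orthonormal ℝ v) (hcard : Fintype.card ι = Module.finrank ℝ E) (x : E) :
    ∑ i, ⟪v i, x⟫ ^ 2 = ‖x‖ ^ 2 := by
  have hspan := (hv.linearIndependent.span_eq_top_of_card_eq_finrank' hcard).ge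
  simpa only [OrthonormalBasis.coe_mk] using (OrthonormalBasis.mk hv hspan).sum_sq_inner_right x

theorem conv_apply (X Y : Img) (q : ℤ × ℤ) :
    conv X Y q = ∑ b ∈ Y.support, X (q - b) * Y b := by
  classical
  simp only [conv, Finsupp.sum, Finsupp.finsetSum_apply, Finsupp.single_apply]
  rw [sum_comm]
  refine sum_congr rfl fun b _ => ?_
  simp only [← eq_sub_iff_add_eq, sum_ite_eq', Finsupp.mem_support_iff, ite_not]
  split_ifs with h <;> simp [h]

theorem conv_apply_eq_sum_of_support_subset (X : Img) {Y : Img} {B : Finset (ℤ × ℤ)}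
    (hB : Y.support ⊆ B) (q : ℤ × ℤ) : conv X Y q = ∑ b ∈ B, X (q - b) * Y b := by
  rw [conv_apply]
  exact sum_subset hB fun b _ hb => by simp [Finsupp.notMem_support_iff.mp hb]

theorem support_conv_subset (X Y : Img) : (conv X Y).support ⊆ X.support + Y.support := by
  intro q hq
  rw [Finsupp.mem_support_iff, conv_apply] at hq
  obtain ⟨b, hb, hne⟩ := exists_ne_zero_of_sum_ne_zero hq
  exact mem_add.2 ⟨q - b, Finsupp.mem_support_iff.2 (left_ne_zero_of_mul hne), b, hb,
    sub_add_cancel q b⟩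

theorem frob_sq_eq_sum_of_support_subset {X : Img} {S : Finset (ℤ × ℤ)} (hS : X.support ⊆ S) :
    frob X ^ 2 = ∑ q ∈ S, X q ^ 2 := by
  have hsum : (X.sum fun _ c => c ^ 2) = ∑ q ∈ S, X q ^ 2 :=
    sum_subset hS fun q _ hq => by simp [Finsupp.notMem_support_iff.mp hq]
  rw [frob, hsum, Real.sq_sqrt (sum_nonneg fun q _ => sq_nonneg _)]

theorem inner2_eq_sum_of_support_subset {X : Img} (Y : Img) {S : Finset (ℤ × ℤ)}
    (hS : X.support ⊆ S) : inner2 X Y = ∑ p ∈ S, X p * Y p :=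
  sum_subset hS fun p _ hp => by simp [Finsupp.notMem_support_iff.mp hp]

theorem sum_sq_sub_eq_frob_sq (X : Img) {p : ℤ × ℤ} {S : Finset (ℤ × ℤ)}
    (hS : X.support + {p} ⊆ S) : ∑ q ∈ S, X (q - p) ^ 2 = frob X ^ 2 := by
  have hshift := sum_map S (Equiv.subRight p).toEmbedding fun r => X r ^ 2
  simp only [Equiv.coe_toEmbedding, Equiv.subRight_apply] at hshift
  rw [← hshift]
  refine (frob_sq_eq_sum_of_support_subset fun x hx => ?_).symm
  exact mem_map_equiv.2 (hS (add_mem_add hx (mem_singleton_self p)))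

noncomputable def grid (a b : ℕ) : Finset (ℤ × ℤ) := Ico 0 (a : ℤ) ×ˢ Ico 0 (b : ℤ)

theorem card_grid (a b : ℕ) : (grid a b).card = a * b := by
  simp [grid]

theorem SuppIn.support_subset_grid {a b : ℕ} {X : Img} (h : SuppIn a b X) :
    X.support ⊆ grid a b := by
  intro p hp
  by_contra hpG
  refine Finsupp.mem_support_iff.1 hp (h p fun hbox => hpG ?_)
  simpa [grid, and_assoc] using hbox

theorem sum_sq_sum_mul_eq_sum_sq_of_orthonormal {ι : Type*} [Fintype ι] [DecidableEq ι]
    {G : Finset (ℤ × ℤ)} {κ : ι → Img} (hsupp : ∀ i, (κ i).support ⊆ G)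
    (hortho : ∀ i j, inner2 (κ i) (κ j) = if i = j then 1 else 0)
    (hcard : Fintype.card ι = G.card) (w : ℤ × ℤ → ℝ) :
    ∑ i, (∑ p ∈ G, w p * κ i p) ^ 2 = ∑ p ∈ G, w p ^ 2 := by
  let restrict : (ℤ × ℤ → ℝ) → EuclideanSpace ℝ G := fun f => WithLp.toLp 2 fun p => f p
  have inner_restrict (f g : ℤ × ℤ → ℝ) : ⟪restrict f, restrict g⟫ = ∑ p ∈ G, f p * g p := by
    rw [PiLp.inner_apply, ← sum_coe_sort G]
    simp [restrict, mul_comm]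
  have hv : Orthonormal ℝ fun i => restrict (κ i) := by
    rw [orthonormal_iff_ite]
    intro i j
    rw [inner_restrict, ← inner2_eq_sum_of_support_subset _ (hsupp i), hortho]
  have hparseval := hv.sum_inner_sq_eq_norm_sq_of_card_eq_finrank
    (by simpa using hcard) (restrict w)
  rw [← real_inner_self_eq_norm_sq, inner_restrict] at hparseval
  simp_rw [inner_restrict, mul_comm (κ _ _)] at hparseval
  simpa [sq] using hparseval

theorem sum_sq_frob_conv_orthonormal_general (s₁ s₂ : ℕ)
    (κ : Fin (s₁ * s₂) → Img) (hsupp : ∀ i, SuppIn s₁ s₂ (κ i))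
    (hortho : ∀ i j, inner2 (κ i) (κ j) = if i = j then 1 else 0)
    (X : Img) :
    ∑ i, frob (conv X (κ i)) ^ 2 = (s₁ : ℝ) * (s₂ : ℝ) * frob X ^ 2 := by
  set G := grid s₁ s₂
  have hG : ∀ i, (κ i).support ⊆ G := fun i => (hsupp i).support_subset_grid
  calc ∑ i, frob (conv X (κ i)) ^ 2
      = ∑ i, ∑ q ∈ X.support + G, (∑ p ∈ G, X (q - p) * κ i p) ^ 2 := by
        refine sum_congr rfl fun i _ => ?_
        rw [frob_sq_eq_sum_of_support_subset
          ((support_conv_subset X (κ i)).trans (add_subset_add_left (s := X.support) (hG i)))]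
        simp only [conv_apply_eq_sum_of_support_subset X (hG i)]
    _ = ∑ q ∈ X.support + G, ∑ p ∈ G, X (q - p) ^ 2 := by
        rw [sum_comm]
        exact sum_congr rfl fun q _ =>
          sum_sq_sum_mul_eq_sum_sq_of_orthonormal hG hortho (by simp [G, card_grid]) _
    _ = ∑ p ∈ G, frob X ^ 2 := by
        rw [sum_comm]
        exact sum_congr rfl fun p hp =>
          sum_sq_sub_eq_frob_sq X (add_subset_add_left (singleton_subset_iff.2 hp))
    _ = (s₁ : ℝ) * (s₂ : ℝ) * frob X ^ 2 := by
        rw [sum_const, card_grid, nsmul_eq_mul, Nat.cast_mul]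

/-- For an orthonormal basis `(κ_i)` of the `s₁ × s₂` grid space,
`∑ᵢ ‖X ⊗ κᵢ‖_F² = s₁ s₂ ‖X‖_F²`. -/
theorem sum_sq_frob_conv_orthonormal (s₁ s₂ : ℕ) (hs₁ : 0 < s₁) (hs₂ : 0 < s₂)
    (κ : Fin (s₁ * s₂) → Img) (hsupp : ∀ i, SuppIn s₁ s₂ (κ i))
    (hortho : ∀ i j, inner2 (κ i) (κ j) = if i = j then 1 else 0)
    (X : Img) :
    ∑ i, frob (conv X (κ i)) ^ 2 = (s₁ : ℝ) * (s₂ : ℝ) * frob X ^ 2 :=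
  sum_sq_frob_conv_orthonormal_general s₁ s₂ κ hsupp hortho X
end

section
/- Fix positive integers s₁, s₂, let (κ_i)_{i=1,…,s₁s₂} be an orthonormal basis of the space of functions supported in the s₁×s₂ grid, and let σ_1,…,σ_{s₁s₂} be reals with 0 < σ_i ≤ σ_max for all i. Define h(X) = ∑_{i=1}^{s₁s₂} ‖X⊗κ_i‖_F² / σ_i². Then for every finitely supported X : ℤ×ℤ → ℝ, one has h(X) ≥ (s₁s₂ / σ_max²)·‖X‖_F². -/
open Finset

lemma frob_sq (Y : Img) : frob Y ^ 2 = Y.sum fun _ c => c ^ 2 := by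
  rw [frob, Real.sq_sqrt]
  exact Finset.sum_nonneg fun p _ => sq_nonneg _

lemma frob_sq_eq_sum {Y : Img} {S : Finset (ℤ × ℤ)} (h : Y.support ⊆ S) :
    frob Y ^ 2 = ∑ p ∈ S, (Y p) ^ 2 := by
  rw [frob_sq, Finsupp.sum]
  refine Finset.sum_subset h fun p _ hp => ?_
  simp [Finsupp.notMem_support_iff.mp hp]

lemma conv_apply_subset (X Y : Img) {G : Finset (ℤ × ℤ)} (h : Y.support ⊆ G)
    (p : ℤ × ℤ) : conv X Y p = ∑ b ∈ G, X (p - b) * Y b := by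
  rw [conv, Finsupp.sum_apply, Finsupp.sum]
  have : ∀ a ∈ X.support, (Y.sum fun b yb => Finsupp.single (a + b) (X a * yb)) p
      = ∑ b ∈ G, (if a = p - b then X a * Y b else 0) := by
    intro a _
    rw [Finsupp.sum_apply, Finsupp.sum]
    refine (Finset.sum_subset h fun b _ hb => by
      simp [Finsupp.notMem_support_iff.mp hb]).trans ?_
    refine Finset.sum_congr rfl fun b _ => ?_
    rw [Finsupp.single_apply]
    congr 1
    exact propext eq_sub_iff_add_eq.symm
  rw [Finset.sum_congr rfl this, Finset.sum_comm]
  refine Finset.sum_congr rfl fun b _ => ?_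
  rw [Finset.sum_ite_eq' X.support (p - b) (fun a => X a * Y b)]
  by_cases hm : p - b ∈ X.support
  · simp [hm]
  · simp [hm, Finsupp.notMem_support_iff.mp hm]

lemma inner2_eq_sum {Y Z : Img} {G : Finset (ℤ × ℤ)} (hY : Y.support ⊆ G) :
    inner2 Y Z = ∑ b ∈ G, Y b * Z b := by
  rw [inner2, Finsupp.sum]
  refine Finset.sum_subset hY fun b _ hb => by
    simp [Finsupp.notMem_support_iff.mp hb]

lemma delta_lemma {N : ℕ} (κ : Fin N → Img) (G : Finset (ℤ × ℤ))
    (hcard : G.card = N)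
    (hsupp : ∀ i, (κ i).support ⊆ G)
    (hortho : ∀ i j, inner2 (κ i) (κ j) = if i = j then 1 else 0)
    {b b' : ℤ × ℤ} (hb : b ∈ G) (hb' : b' ∈ G) :
    ∑ i, κ i b * κ i b' = if b = b' then 1 else 0 := by
  have hcard' : Fintype.card ↥G = N := by rw [Fintype.card_coe, hcard]
  let e : ↥G ≃ Fin N := Fintype.equivFinOfCardEq hcard'
  let A : Matrix (Fin N) (Fin N) ℝ := fun i j => κ i ((e.symm j) : ℤ × ℤ)
  have hA : A * A.transpose = 1 := by
    ext i j
    rw [Matrix.mul_apply, Matrix.one_apply]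
    have : ∑ k, A i k * A.transpose k j = ∑ g : ↥G, κ i (g : ℤ × ℤ) * κ j (g : ℤ × ℤ) := by
      rw [← Equiv.sum_comp e.symm (fun g => κ i (g : ℤ × ℤ) * κ j (g : ℤ × ℤ))]
      rfl
    rw [this]
    have := hortho i j
    rw [inner2_eq_sum (hsupp i)] at this
    rw [← Finset.sum_attach G (fun b => κ i b * κ j b)] at this
    rw [Finset.univ_eq_attach, this]
  have hA' : A.transpose * A = 1 := mul_eq_one_comm.mp hA
  have key : ∀ g g' : ↥G, ∑ i, κ i (g : ℤ × ℤ) * κ i (g' : ℤ × ℤ)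
      = if g = g' then 1 else 0 := by
    intro g g'
    have h1 := congrFun (congrFun hA' (e g)) (e g')
    rw [Matrix.mul_apply, Matrix.one_apply] at h1
    simp only [Matrix.transpose_apply] at h1
    have h2 : ∀ i, A i (e g) * A i (e g') = κ i (g : ℤ × ℤ) * κ i (g' : ℤ × ℤ) := by
      intro i; simp [A]
    rw [Finset.sum_congr rfl (fun i _ => h2 i)] at h1
    rw [h1]
    simp [Equiv.apply_eq_iff_eq]
  have := key ⟨b, hb⟩ ⟨b', hb'⟩
  simpa [Subtype.ext_iff] using this

lemma parseval_pointwise {N : ℕ} (κ : Fin N → Img) (G : Finset (ℤ × ℤ))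
    (hδ : ∀ b ∈ G, ∀ b' ∈ G, ∑ i, κ i b * κ i b' = if b = b' then 1 else 0)
    (f : ℤ × ℤ → ℝ) :
    ∑ i, (∑ b ∈ G, f b * κ i b) ^ 2 = ∑ b ∈ G, (f b) ^ 2 := by
  have step1 : ∀ i : Fin N, (∑ b ∈ G, f b * κ i b) ^ 2
      = ∑ b ∈ G, ∑ b' ∈ G, (f b * f b') * (κ i b * κ i b') := by
    intro i
    rw [sq, Finset.sum_mul_sum]
    exact Finset.sum_congr rfl fun b _ => Finset.sum_congr rfl fun b' _ => by ring
  rw [Finset.sum_congr rfl fun i _ => step1 i, Finset.sum_comm]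
  have step2 : ∀ b ∈ G, (∑ i : Fin N, ∑ b' ∈ G, (f b * f b') * (κ i b * κ i b'))
      = (f b) ^ 2 := by
    intro b hb
    rw [Finset.sum_comm]
    have : ∀ b' ∈ G, (∑ i : Fin N, (f b * f b') * (κ i b * κ i b'))
        = (f b * f b') * (if b = b' then 1 else 0) := by
      intro b' hb'
      rw [← Finset.mul_sum, hδ b hb b' hb']
    rw [Finset.sum_congr rfl this]
    simp only [mul_ite, mul_one, mul_zero]
    rw [Finset.sum_ite_eq G b (fun b' => f b * f b')]
    simp [hb, sq]
  exact Finset.sum_congr rfl step2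

open Pointwise in
lemma key_identity {N : ℕ} (κ : Fin N → Img) (G : Finset (ℤ × ℤ))
    (hsupp : ∀ i, (κ i).support ⊆ G)
    (hδ : ∀ b ∈ G, ∀ b' ∈ G, ∑ i, κ i b * κ i b' = if b = b' then 1 else 0)
    (X : Img) :
    ∑ i, frob (conv X (κ i)) ^ 2 = (G.card : ℝ) * frob X ^ 2 := by
  classical
  set S : Finset (ℤ × ℤ) := X.support + G with hS
  have hconvsupp : ∀ i, (conv X (κ i)).support ⊆ S := by
    intro i p hp
    by_contra hpS
    apply Finsupp.mem_support_iff.mp hp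
    rw [conv_apply_subset X (κ i) (hsupp i) p]
    refine Finset.sum_eq_zero fun b hb => ?_
    have hX : X (p - b) = 0 := by
      by_contra hx
      exact hpS (Finset.mem_add.mpr ⟨p - b, Finsupp.mem_support_iff.mpr hx, b, hb,
        by abel⟩)
    rw [hX, zero_mul]
  calc ∑ i, frob (conv X (κ i)) ^ 2
      = ∑ i, ∑ p ∈ S, (∑ b ∈ G, X (p - b) * κ i b) ^ 2 := by
        refine Finset.sum_congr rfl fun i _ => ?_
        rw [frob_sq_eq_sum (hconvsupp i)]
        exact Finset.sum_congr rfl fun p _ => by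
          rw [conv_apply_subset X (κ i) (hsupp i) p]
    _ = ∑ p ∈ S, ∑ i, (∑ b ∈ G, X (p - b) * κ i b) ^ 2 := Finset.sum_comm
    _ = ∑ p ∈ S, ∑ b ∈ G, (X (p - b)) ^ 2 := by
        exact Finset.sum_congr rfl fun p _ =>
          parseval_pointwise κ G hδ (fun b => X (p - b))
    _ = ∑ b ∈ G, ∑ p ∈ S, (X (p - b)) ^ 2 := Finset.sum_comm
    _ = ∑ b ∈ G, frob X ^ 2 := by
        refine Finset.sum_congr rfl fun b hb => ?_
        have hsub : X.support ⊆ S.image (· - b) := by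
          intro q hq
          refine Finset.mem_image.mpr ⟨q + b, ?_, by abel⟩
          exact Finset.mem_add.mpr ⟨q, hq, b, hb, rfl⟩
        rw [frob_sq_eq_sum hsub, Finset.sum_image ?_]
        intro x _ y _ hxy
        simpa using hxy
    _ = (G.card : ℝ) * frob X ^ 2 := by
        rw [Finset.sum_const, nsmul_eq_mul]

/-- Lower bound on the regularizer `h(X) = ∑ᵢ ‖X ⊗ κᵢ‖_F² / σᵢ²`. -/
theorem regularizer_lower_bound (s₁ s₂ : ℕ) (hs₁ : 0 < s₁) (hs₂ : 0 < s₂)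
    (κ : Fin (s₁ * s₂) → Img) (hsupp : ∀ i, SuppIn s₁ s₂ (κ i))
    (hortho : ∀ i j, inner2 (κ i) (κ j) = if i = j then 1 else 0)
    (σ : Fin (s₁ * s₂) → ℝ) (σmax : ℝ)
    (hσ : ∀ i, 0 < σ i) (hσmax : ∀ i, σ i ≤ σmax)
    (X : Img) :
    ((s₁ : ℝ) * (s₂ : ℝ) / σmax ^ 2) * frob X ^ 2 ≤
      ∑ i, frob (conv X (κ i)) ^ 2 / (σ i) ^ 2 := by
  classical
  set G : Finset (ℤ × ℤ) := Finset.Ico (0 : ℤ) (s₁ : ℤ) ×ˢ Finset.Ico (0 : ℤ) (s₂ : ℤ)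
    with hG
  have hcard : G.card = s₁ * s₂ := by
    rw [hG, Finset.card_product, Int.card_Ico, Int.card_Ico]
    simp
  have hsuppG : ∀ i, (κ i).support ⊆ G := by
    intro i p hp
    rw [hG, Finset.mem_product, Finset.mem_Ico, Finset.mem_Ico]
    by_contra hc
    refine Finsupp.mem_support_iff.mp hp (hsupp i p fun hcc => hc ?_)
    exact ⟨⟨hcc.1, hcc.2.1⟩, hcc.2.2.1, hcc.2.2.2⟩
  have hδ : ∀ b ∈ G, ∀ b' ∈ G, ∑ i, κ i b * κ i b' = if b = b' then 1 else 0 :=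
    fun b hb b' hb' => delta_lemma κ G hcard hsuppG hortho hb hb'
  have hkey := key_identity κ G hsuppG hδ X
  have hNpos : 0 < s₁ * s₂ := Nat.mul_pos hs₁ hs₂
  have hσmaxpos : 0 < σmax := lt_of_lt_of_le (hσ ⟨0, hNpos⟩) (hσmax ⟨0, hNpos⟩)
  calc ((s₁ : ℝ) * (s₂ : ℝ) / σmax ^ 2) * frob X ^ 2
      = (∑ i, frob (conv X (κ i)) ^ 2) / σmax ^ 2 := by
        rw [hkey, hcard]
        push_cast
        ring
    _ = ∑ i, frob (conv X (κ i)) ^ 2 / σmax ^ 2 := Finset.sum_div _ _ _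
    _ ≤ ∑ i, frob (conv X (κ i)) ^ 2 / (σ i) ^ 2 := by
        refine Finset.sum_le_sum fun i _ => ?_
        exact div_le_div_of_nonneg_left (sq_nonneg _) (pow_pos (hσ i) 2)
          (pow_le_pow_left₀ (hσ i).le (hσmax i) 2)
end

section
/- Fix positive integers m₁, m₂, s₁, s₂. Let L, I₀, K₀ be finitely supported functions ℤ×ℤ → ℝ with K₀ in the simplex S and supported in the m₁×m₂ grid, and set B = I₀⊗K₀. Let (κ_i)_{i=1,…,s₁s₂} be functions supported in the s₁×s₂ grid with ‖κ_i‖_F = 1 for every i, set σ_i = ‖(L⊗B)⊗κ_i‖_F, and assume σ_i > 0 for all i. Suppose τ > 0 satisfies ‖(L⊗I₀)⊗X‖_F ≥ τ·‖X‖_F for every X supported in the (m₁+s₁−1)×(m₂+s₂−1) grid. Then the regularizer h(K) = ∑_{i=1}^{s₁s₂} ‖K⊗κ_i‖_F²/σ_i² satisfies h(K₀) ≤ s₁s₂ / τ². -/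
/- Since `K₀` and `κ i` live in grids of sizes `m₁ × m₂` and `s₁ × s₂`, their convolution lives in the
`(m₁+s₁-1) × (m₂+s₂-1)` grid where `L ⊗ I₀` is bounded below by `τ`; by associativity
`σ i = ‖(L ⊗ I₀) ⊗ (K₀ ⊗ κ i)‖_F ≥ τ ‖K₀ ⊗ κ i‖_F`, so each of the `s₁ s₂` summands is at most `1 / τ²`. -/

lemma conv_eq_coeff_mul (X Y : Img) :
    conv X Y = (AddMonoidAlgebra.ofCoeff X * AddMonoidAlgebra.ofCoeff Y : AddMonoidAlgebra ℝ (ℤ × ℤ)).coeff := by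
  rw [AddMonoidAlgebra.mul_def]
  simp only [AddMonoidAlgebra.coeff_finsuppSum, AddMonoidAlgebra.coeff_single]
  rfl

lemma conv_assoc (X Y Z : Img) : conv (conv X Y) Z = conv X (conv Y Z) := by
  simp only [conv_eq_coeff_mul, AddMonoidAlgebra.ofCoeff_coeff, mul_assoc]

lemma SuppIn.conv {a b c d : ℕ} {X Y : Img} (hX : SuppIn a b X) (hY : SuppIn c d Y) :
    SuppIn (a + c - 1) (b + d - 1) (conv X Y) := by
  intro p hp
  by_contra hne
  rw [conv_eq_coeff_mul] at hne
  obtain ⟨x, hx, y, hy, rfl⟩ := Finset.mem_add.1 <|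
    AddMonoidAlgebra.support_coeff_mul_subset _ _ (Finsupp.mem_support_iff.2 hne)
  have hx' := not_not.1 (mt (hX x) (Finsupp.mem_support_iff.1 hx))
  have hy' := not_not.1 (mt (hY y) (Finsupp.mem_support_iff.1 hy))
  simp only [Prod.fst_add, Prod.snd_add] at hp
  omega

lemma frob_nonneg (X : Img) : 0 ≤ frob X := Real.sqrt_nonneg _

lemma sq_div_sq_le_one_div_sq_of_mul_le {τ f σ : ℝ} (hτ : 0 < τ) (hf : 0 ≤ f) (h : τ * f ≤ σ) :
    f ^ 2 / σ ^ 2 ≤ 1 / τ ^ 2 := by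
  rcases (mul_nonneg hτ.le hf).trans h |>.eq_or_lt with hσ | hσ
  · -- junk value: `f ^ 2 / 0 = 0`
    simp only [← hσ, ne_eq, OfNat.ofNat_ne_zero, not_false_eq_true, zero_pow, div_zero]
    positivity
  · rw [div_le_div_iff₀ (by positivity) (by positivity), one_mul, ← mul_pow, mul_comm f]
    exact pow_le_pow_left₀ (by positivity) h 2

theorem regularizer_at_true_kernel_noiseless_general (m₁ m₂ s₁ s₂ : ℕ)
    (L I₀ K₀ B : Img) (hK₀supp : SuppIn m₁ m₂ K₀)
    (hB : B = conv I₀ K₀)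
    (κ : Fin (s₁ * s₂) → Img) (hκsupp : ∀ i, SuppIn s₁ s₂ (κ i))
    (σ : Fin (s₁ * s₂) → ℝ) (hσ : ∀ i, σ i = frob (conv (conv L B) (κ i)))
    (τ : ℝ) (hτ : 0 < τ)
    (hsharp : ∀ X : Img, SuppIn (m₁ + s₁ - 1) (m₂ + s₂ - 1) X →
      τ * frob X ≤ frob (conv (conv L I₀) X)) :
    ∑ i, frob (conv K₀ (κ i)) ^ 2 / (σ i) ^ 2 ≤ (s₁ : ℝ) * (s₂ : ℝ) / τ ^ 2 := by
  have hσ_ge (i) : τ * frob (conv K₀ (κ i)) ≤ σ i := by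
    rw [hσ i, hB, ← conv_assoc, conv_assoc _ K₀]
    exact hsharp _ (hK₀supp.conv (hκsupp i))
  calc ∑ i, frob (conv K₀ (κ i)) ^ 2 / (σ i) ^ 2
      ≤ ∑ _i : Fin (s₁ * s₂), 1 / τ ^ 2 :=
        Finset.sum_le_sum fun i _ => sq_div_sq_le_one_div_sq_of_mul_le hτ (frob_nonneg _) (hσ_ge i)
    _ = (s₁ : ℝ) * (s₂ : ℝ) / τ ^ 2 := by simp [div_eq_mul_inv]

/-- The regularizer evaluated at the true kernel is at most `s₁s₂ / τ²` (noiseless case). -/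
theorem regularizer_at_true_kernel_noiseless (m₁ m₂ s₁ s₂ : ℕ)
    (hm₁ : 0 < m₁) (hm₂ : 0 < m₂) (hs₁ : 0 < s₁) (hs₂ : 0 < s₂)
    (L I₀ K₀ B : Img) (hK₀ : InSimplex K₀) (hK₀supp : SuppIn m₁ m₂ K₀)
    (hB : B = conv I₀ K₀)
    (κ : Fin (s₁ * s₂) → Img) (hκsupp : ∀ i, SuppIn s₁ s₂ (κ i))
    (hκnorm : ∀ i, frob (κ i) = 1)
    (σ : Fin (s₁ * s₂) → ℝ) (hσ : ∀ i, σ i = frob (conv (conv L B) (κ i)))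
    (hσpos : ∀ i, 0 < σ i)
    (τ : ℝ) (hτ : 0 < τ)
    (hsharp : ∀ X : Img, SuppIn (m₁ + s₁ - 1) (m₂ + s₂ - 1) X →
      τ * frob X ≤ frob (conv (conv L I₀) X)) :
    ∑ i, frob (conv K₀ (κ i)) ^ 2 / (σ i) ^ 2 ≤ (s₁ : ℝ) * (s₂ : ℝ) / τ ^ 2 :=
  regularizer_at_true_kernel_noiseless_general m₁ m₂ s₁ s₂ L I₀ K₀ B hK₀supp hB κ hκsupp σ hσ τ hτ
    hsharp
end
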